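/- arXiv:1605.06265 — 2 statements merged into one kernel-verified Lean document; each statement's English description precedes it below -/
import Mathlib

section
/- Let z ∈ R^p with ‖z‖ = 1, L : R^p → R differentiable, η > 0 with 1 + η⟨z, ∇L(z)⟩ > 0. Then the projection onto the unit sphere of z - η(I - zzᵀ)∇L(z) equals the projection onto the unit sphere of z - η'∇L(z), where η' = η/(1 + η⟨z,∇L(z)⟩). -/
open RealInnerProductSpace

/-- A gradient step on the sphere equals a projected gradient step in `ℝ^p` with a
particular step size: with `g = ∇L(z)` and `Proj u = u / ‖u‖`,
`Proj (z - η (I - zzᵀ) g) = Proj (z - (η / (1 + η ⟪z, g⟫)) g)`. -/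
theorem stmt_8 {p : ℕ} (z : EuclideanSpace ℝ (Fin p)) (hz : ‖z‖ = 1)
    (L : EuclideanSpace ℝ (Fin p) → ℝ) (hL : Differentiable ℝ L)
    (η : ℝ) (hη : 0 < η) (hpos : 0 < 1 + η * ⟪z, gradient L z⟫) :
    ‖z - η • (gradient L z - ⟪z, gradient L z⟫ • z)‖⁻¹
        • (z - η • (gradient L z - ⟪z, gradient L z⟫ • z))
      = ‖z - (η / (1 + η * ⟪z, gradient L z⟫)) • gradient L z‖⁻¹
        • (z - (η / (1 + η * ⟪z, gradient L z⟫)) • gradient L z) := by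
  set g := gradient L z
  set c := 1 + η * ⟪z, g⟫ with hc
  have hc0 : c ≠ 0 := ne_of_gt hpos
  have key : z - η • (g - ⟪z, g⟫ • z) = c • (z - (η / c) • g) := by
    have h2 : c • (z - (η / c) • g) = c • z - η • g := by
      rw [smul_sub, smul_smul, mul_div_cancel₀ _ hc0]
    rw [h2, hc]
    module
  rw [key, norm_smul, smul_smul, Real.norm_eq_abs, abs_of_pos hpos]
  congr 1
  rw [mul_inv, mul_comm, ← mul_assoc, mul_inv_cancel₀ hc0, one_mul]
end

section
/- Let L : X × Y → R be differentiable in a Banach space setting where the k-th feature map I_k^{Z} depends on parameters Z and satisfies the first-order expansion I_k^{Z+E} = I_k^{Z} + ΔI_k^{Z,E} + o(‖E‖) with ⟨ΔI_j^{Z,E}, U⟩ = ⟨ε_j, g_j(U)⟩ + ⟨ΔI_{j-1}^{Z,E}, h_j(U)⟩ for linear maps g_j, h_j and ΔI_0 = 0. Then the gradient of Z_j ↦ L(y, ⟨W, I_k^Z⟩) is L'(y, ⟨W, I_k^Z⟩)·g_j(h_{j+1}(⋯h_k(W))). -/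
/-!
Perturb only the `j`-th parameter, `E = Pi.single j ε`. The recursion then forces `ΔI_m = 0`
for `m < j`, while for `m ≥ j` the quantity `⟪ΔI_m, v_m⟫` does not depend on `m`: testing the
recursion against `U = v_m` turns its `h_m`-term into `⟪ΔI_{m-1}, v_{m-1}⟫`. At `m = j` it equals
`⟪ε, g_j v_j⟫`. Hence the first-order change `⟪W, ΔI_k⟫ = ⟪ΔI_k, v_k⟫` of `⟪W, I_k⟫` is
`⟪g_j v_j, ε⟫`, and the chain rule for `L` gives the gradient.
-/

open RealInnerProductSpace Asymptotics Filter Topology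

theorem Function.update_add_eq_add_single {ι : Type*} [DecidableEq ι] {E : ι → Type*}
    [∀ i, AddCommGroup (E i)] (x : ∀ i, E i) (j : ι) (t : E j) :
    Function.update x j (x j + t) = x + Pi.single j t := by
  funext i
  rcases eq_or_ne i j with rfl | hi <;> simp [*]

theorem hasFDerivAt_update_of_isLittleO {𝕜 ι G : Type*} [NontriviallyNormedField 𝕜]
    [Fintype ι] [DecidableEq ι] {E : ι → Type*} [∀ i, NormedAddCommGroup (E i)]
    [∀ i, NormedSpace 𝕜 (E i)] [NormedAddCommGroup G] [NormedSpace 𝕜 G]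
    {f Δ : (∀ i, E i) → G} {x : ∀ i, E i}
    (hf : (fun e => f (x + e) - f x - Δ e) =o[𝓝 0] fun e => ‖e‖)
    {j : ι} {φ : E j →L[𝕜] G} (hΔ : ∀ t, Δ (Pi.single j t) = φ t) :
    HasFDerivAt (fun t => f (Function.update x j t)) φ (x j) := by
  rw [hasFDerivAt_iff_isLittleO_nhds_zero]
  have hsingle : Tendsto (Pi.single j : E j → ∀ i, E i) (𝓝 0) (𝓝 0) :=
    (continuous_single j).tendsto' 0 0 (Pi.single_zero j)
  have := hf.comp_tendsto hsingle
  simp only [Function.comp_def, Pi.norm_single, hΔ, ← Function.update_add_eq_add_single] at this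
  rw [Function.update_eq_self]
  exact isLittleO_norm_right.1 this

theorem Fin.succ_sub_one_eq_castSucc {n : ℕ} (i : Fin n) : i.succ - 1 = i.castSucc := by
  ext; simp [Fin.coe_sub_one]

namespace Backprop

variable {k : ℕ} {P F : Fin (k + 1) → Type*}
  [∀ m, NormedAddCommGroup (P m)] [∀ m, InnerProductSpace ℝ (P m)]
  [∀ m, NormedAddCommGroup (F m)] [∀ m, InnerProductSpace ℝ (F m)]
  {g : ∀ m, F m →ₗ[ℝ] P m} {h : ∀ m : Fin (k + 1), F m →ₗ[ℝ] F (m - 1)}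
  {ε : ∀ m, P m} {D : ∀ m, F m}

theorem perturbation_eq_zero_of_lt (hD0 : D 0 = 0)
    (hrec : ∀ m, 0 < m → ∀ U, ⟪D m, U⟫ = ⟪ε m, g m U⟫ + ⟪D (m - 1), h m U⟫)
    {j : Fin (k + 1)} (hε : ∀ m < j, ε m = 0) : ∀ m < j, D m = 0 := by
  intro m
  induction m using Fin.induction with
  | zero => exact fun _ => hD0
  | succ i ih =>
    intro hi
    have hprev : D (i.succ - 1) = 0 := by
      rw [Fin.succ_sub_one_eq_castSucc]
      exact ih (i.castSucc_lt_succ.trans hi)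
    refine ext_inner_right ℝ fun U => ?_
    rw [hrec _ i.succ_pos, hε _ hi, hprev, inner_zero_left, inner_zero_left,
      inner_zero_left, add_zero]

theorem inner_perturbation_eq_of_le (hD0 : D 0 = 0)
    (hrec : ∀ m, 0 < m → ∀ U, ⟪D m, U⟫ = ⟪ε m, g m U⟫ + ⟪D (m - 1), h m U⟫)
    {j : Fin (k + 1)} (hj : 0 < j) (hε : ∀ m ≠ j, ε m = 0)
    {v : ∀ m, F m} (hv : ∀ m, j < m → v (m - 1) = h m (v m)) :
    ∀ m, j ≤ m → ⟪D m, v m⟫ = ⟪ε j, g j (v j)⟫ := by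
  intro m
  induction m using Fin.induction with
  | zero => exact fun hj0 => absurd hj0 hj.not_ge
  | succ i ih =>
    intro hi
    rcases hi.eq_or_lt with rfl | hlt
    · have hprev : D (i.succ - 1) = 0 :=
        perturbation_eq_zero_of_lt hD0 hrec (fun m hm => hε m hm.ne)
          _ (by rw [Fin.succ_sub_one_eq_castSucc]; exact i.castSucc_lt_succ)
      rw [hrec _ i.succ_pos, hprev, inner_zero_left, add_zero]
    · have hprev : ⟪D (i.succ - 1), v (i.succ - 1)⟫ = ⟪ε j, g j (v j)⟫ := by
        rw [Fin.succ_sub_one_eq_castSucc]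
        exact ih (Fin.le_castSucc_iff.2 hlt)
      rw [hrec _ i.succ_pos, hε _ hlt.ne', inner_zero_left, zero_add, ← hv _ hlt, hprev]

end Backprop

open Backprop

theorem stmt_15_general {k : ℕ}
    (P : Fin (k + 1) → Type) [∀ j, NormedAddCommGroup (P j)]
    [∀ j, InnerProductSpace ℝ (P j)] [∀ j, FiniteDimensional ℝ (P j)]
    (F : Fin (k + 1) → Type) [∀ j, NormedAddCommGroup (F j)]
    [∀ j, InnerProductSpace ℝ (F j)]
    (I : (∀ j, P j) → ∀ j, F j)
    (ΔI : (∀ j, P j) → (∀ j, P j) → ∀ j, F j)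
    (g : ∀ j, F j →ₗ[ℝ] P j) (h : ∀ j : Fin (k + 1), F j →ₗ[ℝ] F (j - 1))
    (Z : ∀ j, P j)
    (hΔ0 : ∀ E, ΔI Z E 0 = 0)
    (hΔrec : ∀ E, ∀ j : Fin (k + 1), 1 ≤ (j : ℕ) → ∀ U : F j,
      ⟪ΔI Z E j, U⟫ = ⟪E j, g j U⟫ + ⟪ΔI Z E (j - 1), h j U⟫)
    (hexp : ∀ j : Fin (k + 1),
      (fun E : ∀ j, P j => I (Z + E) j - I Z j - ΔI Z E j) =o[nhds 0]
        fun E : ∀ j, P j => ‖E‖)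
    (L : ℝ → ℝ) (hL : Differentiable ℝ L)
    (W : F (Fin.last k)) (j : Fin (k + 1)) (hj : 1 ≤ (j : ℕ))
    (v : ∀ m, F m) (hvk : v (Fin.last k) = W)
    (hv : ∀ m : Fin (k + 1), j < m → v (m - 1) = h m (v m)) :
    HasGradientAt (fun Zj : P j => L ⟪W, I (Function.update Z j Zj) (Fin.last k)⟫)
      (deriv L ⟪W, I Z (Fin.last k)⟫ • g j (v j)) (Z j) := by
  have hΔW (t : P j) : ⟪W, ΔI Z (Pi.single j t) (Fin.last k)⟫ = ⟪g j (v j), t⟫ := by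
    rw [real_inner_comm, ← hvk, inner_perturbation_eq_of_le (hΔ0 _) (hΔrec _) hj
      (fun m hm => Pi.single_eq_of_ne hm t) hv _ (Fin.le_last j), Pi.single_eq_same,
      real_inner_comm]
  have hexpW : (fun E => ⟪W, I (Z + E) (Fin.last k)⟫ - ⟪W, I Z (Fin.last k)⟫
      - ⟪W, ΔI Z E (Fin.last k)⟫) =o[𝓝 0] fun E => ‖E‖ :=
    (((innerSL ℝ W).isBigO_comp _ _).trans_isLittleO (hexp _)).congr_left
      fun E => by simp [inner_sub_right]
  have hinner := hasFDerivAt_update_of_isLittleO (f := fun Z' => ⟪W, I Z' (Fin.last k)⟫)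
    (Δ := fun E => ⟪W, ΔI Z E (Fin.last k)⟫) hexpW
    (φ := InnerProductSpace.toDual ℝ (P j) (g j (v j))) hΔW
  rw [hasGradientAt_iff_hasFDerivAt, map_smul]
  simpa [Function.comp_def] using (hL _).hasDerivAt.comp_hasFDerivAt (Z j) hinner

/-- Perturbation view of backpropagation. Parameters `Z = (Z_1, ..., Z_k)` live in inner
product spaces `P j` (Frobenius inner product on matrices), and the feature maps `I_j^Z`
live in inner product spaces `F j`, for `j = 0, ..., k` (indices in `Fin (k+1)`).
Assume the first-order expansion `I_j^{Z+E} = I_j^Z + ΔI_j^{Z,E} + o(‖E‖)` holds, where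
`ΔI_0 = 0` and `⟪ΔI_j, U⟫ = ⟪ε_j, g_j U⟫ + ⟪ΔI_{j-1}, h_j U⟫` for linear maps `g_j, h_j`.
Then the gradient of `Z_j ↦ L(⟪W, I_k^Z⟫)` is `L'(⟪W, I_k^Z⟫) • g_j(h_{j+1}(⋯ h_k(W)))`,
the backward recursion being encoded by `v` with `v k = W` and `v (m-1) = h_m (v m)`. -/
theorem stmt_15 {k : ℕ}
    (P : Fin (k + 1) → Type) [∀ j, NormedAddCommGroup (P j)]
    [∀ j, InnerProductSpace ℝ (P j)] [∀ j, FiniteDimensional ℝ (P j)]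
    (F : Fin (k + 1) → Type) [∀ j, NormedAddCommGroup (F j)]
    [∀ j, InnerProductSpace ℝ (F j)] [∀ j, FiniteDimensional ℝ (F j)]
    (I : (∀ j, P j) → ∀ j, F j)
    (ΔI : (∀ j, P j) → (∀ j, P j) → ∀ j, F j)
    (g : ∀ j, F j →ₗ[ℝ] P j) (h : ∀ j : Fin (k + 1), F j →ₗ[ℝ] F (j - 1))
    (Z : ∀ j, P j)
    (hΔ0 : ∀ E, ΔI Z E 0 = 0)
    (hΔrec : ∀ E, ∀ j : Fin (k + 1), 1 ≤ (j : ℕ) → ∀ U : F j,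
      ⟪ΔI Z E j, U⟫ = ⟪E j, g j U⟫ + ⟪ΔI Z E (j - 1), h j U⟫)
    (hexp : ∀ j : Fin (k + 1),
      (fun E : ∀ j, P j => I (Z + E) j - I Z j - ΔI Z E j) =o[nhds 0]
        fun E : ∀ j, P j => ‖E‖)
    (L : ℝ → ℝ) (hL : Differentiable ℝ L)
    (W : F (Fin.last k)) (j : Fin (k + 1)) (hj : 1 ≤ (j : ℕ))
    (v : ∀ m, F m) (hvk : v (Fin.last k) = W)
    (hv : ∀ m : Fin (k + 1), j < m → v (m - 1) = h m (v m)) :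
    HasGradientAt (fun Zj : P j => L ⟪W, I (Function.update Z j Zj) (Fin.last k)⟫)
      (deriv L ⟪W, I Z (Fin.last k)⟫ • g j (v j)) (Z j) :=
  stmt_15_general P F I ΔI g h Z hΔ0 hΔrec hexp L hL W j hj v hvk hv
end
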